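/- arXiv:2106.15562 — 2 statements merged into one kernel-verified Lean document; each statement's English description precedes it below -/
import Mathlib

section
/- A map f : V → W between vector spaces over a field k of characteristic 0 such that for every linear functional φ ∈ W* the composition φ ∘ f restricts to a polynomial of degree ≤ d on every finite-dimensional subspace of V, satisfies: for every finite-dimensional subspace V' ⊆ V, the span of f(V') is finite-dimensional, of dimension at most dim Sym_{≤d}((V')*). -/
/-- `g : V → k` restricts to a polynomial function of degree at most `d` on every
finite-dimensional subspace of `V`: on the span of any finite tuple of vectors, `g` is
given in coordinates by a polynomial of total degree at most `d`. -/
def RestrictsToPolyDeg (k : Type) [Field k] {V : Type} [AddCommGroup V] [Module k V]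
    (d : ℕ) (g : V → k) : Prop :=
  ∀ (m : ℕ) (v : Fin m → V), ∃ P : MvPolynomial (Fin m) k, P.totalDegree ≤ d ∧
    ∀ c : Fin m → k, g (∑ i, c i • v i) = MvPolynomial.eval c P

/-!
Let `F` be the space of polynomial functions of degree `≤ d` on `V'`, so every `φ ∘ f`
restricted to `V'` lies in `F`. A finite linear relation `∑ cᵢ • evᵢ = 0` among the evaluation
functionals `evᵢ : F → k` at points `zᵢ ∈ V'` gives `φ (∑ cᵢ • f zᵢ) = 0` for every `φ ∈ W*`,
hence `∑ cᵢ • f zᵢ = 0`. So `span (f '' V')` is a quotient of a subspace of `F*`.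
-/

open Module

namespace LinearMap

variable {R M N P : Type*} [Ring R]
  [AddCommGroup M] [Module R M] [AddCommGroup N] [Module R N] [AddCommGroup P] [Module R P]
  {A : M →ₗ[R] N} {B : M →ₗ[R] P} [Module.Finite R (range A)]

theorem finite_range_of_ker_le (h : ker A ≤ ker B) : Module.Finite R (range B) := by
  have : Module.Finite R (M ⧸ ker A) := Module.Finite.equiv A.quotKerEquivRange.symm
  rw [← Submodule.range_liftQ _ B h]
  infer_instance

theorem finrank_range_le_of_ker_le [StrongRankCondition R] (h : ker A ≤ ker B) :
    finrank R (range B) ≤ finrank R (range A) := by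
  have : Module.Finite R (M ⧸ ker A) := Module.Finite.equiv A.quotKerEquivRange.symm
  rw [← Submodule.range_liftQ _ B h]
  exact (finrank_range_le _).trans_eq A.quotKerEquivRange.finrank_eq

end LinearMap

section DualCompMem

variable {k W ι : Type*} [Field k] [AddCommGroup W] [Module k W]
  {g : ι → W} {F : Submodule k (ι → k)}

theorem ker_linearCombination_proj_subtype_le (hF : ∀ φ : Dual k W, ⇑φ ∘ g ∈ F) :
    LinearMap.ker (Finsupp.linearCombination k fun i => LinearMap.proj i ∘ₗ F.subtype) ≤
      LinearMap.ker (Finsupp.linearCombination k g) := by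
  intro c hc
  rw [LinearMap.mem_ker] at hc ⊢
  refine (forall_dual_apply_eq_zero_iff k _).1 fun φ => ?_
  have hφ := LinearMap.congr_fun hc ⟨_, hF φ⟩
  simpa [Finsupp.linearCombination_apply, Finsupp.sum] using hφ

variable [FiniteDimensional k F]

theorem finiteDimensional_span_range_of_dual_comp_mem (hF : ∀ φ : Dual k W, ⇑φ ∘ g ∈ F) :
    FiniteDimensional k (Submodule.span k (Set.range g)) := by
  rw [← Finsupp.range_linearCombination]
  exact LinearMap.finite_range_of_ker_le (ker_linearCombination_proj_subtype_le hF)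

theorem finrank_span_range_le_of_dual_comp_mem (hF : ∀ φ : Dual k W, ⇑φ ∘ g ∈ F) :
    finrank k (Submodule.span k (Set.range g)) ≤ finrank k F := by
  rw [← Finsupp.range_linearCombination]
  calc _ ≤ finrank k (LinearMap.range
          (Finsupp.linearCombination k fun i => LinearMap.proj i ∘ₗ F.subtype)) :=
        LinearMap.finrank_range_le_of_ker_le (ker_linearCombination_proj_subtype_le hF)
    _ ≤ finrank k (Dual k F) := Submodule.finrank_le _
    _ = finrank k F := Subspace.dual_finrank_eq

end DualCompMem

section PolynomialFunctions

variable {k V : Type} {U : Type*} [Field k] [AddCommGroup U] [Module k U] [AddCommGroup V] [Module k V]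

noncomputable def Module.Basis.evalPolynomial {σ : Type*} (b : Basis σ k U) :
    MvPolynomial σ k →ₗ[k] U → k :=
  LinearMap.pi fun u => (MvPolynomial.aeval (b.repr u)).toLinearMap

theorem RestrictsToPolyDeg.comp_mem_map_restrictTotalDegree {d m : ℕ} {g : V → k}
    (hg : RestrictsToPolyDeg k d g) (ℓ : U →ₗ[k] V) (b : Basis (Fin m) k U) :
    g ∘ ℓ ∈ (MvPolynomial.restrictTotalDegree (Fin m) k d).map b.evalPolynomial := by
  obtain ⟨P, hdeg, heval⟩ := hg m (ℓ ∘ b)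
  refine ⟨P, (MvPolynomial.mem_restrictTotalDegree _ _ _).2 hdeg, funext fun u => ?_⟩
  calc b.evalPolynomial P u = MvPolynomial.eval (b.repr u) P := rfl
    _ = g (∑ i, b.repr u i • ℓ (b i)) := (heval _).symm
    _ = g (ℓ u) := by simp only [← map_smul, ← map_sum, b.sum_repr]

end PolynomialFunctions

theorem stmt4_general (k V W : Type) [Field k]
    [AddCommGroup V] [Module k V] [AddCommGroup W] [Module k W]
    (d : ℕ) (f : V → W)
    (hf : ∀ φ : W →ₗ[k] k, RestrictsToPolyDeg k d (φ ∘ f)) :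
    ∀ V' : Submodule k V, FiniteDimensional k V' →
      FiniteDimensional k (Submodule.span k (f '' (V' : Set V))) ∧
      Module.finrank k (Submodule.span k (f '' (V' : Set V))) ≤
        Module.finrank k
          (MvPolynomial.restrictTotalDegree (Fin (Module.finrank k V')) k d) := by
  intro V' _
  have hcomp (φ : Dual k W) :=
    (hf φ).comp_mem_map_restrictTotalDegree V'.subtype (Module.finBasis k V')
  rw [Set.image_eq_range]
  exact ⟨finiteDimensional_span_range_of_dual_comp_mem hcomp,
    (finrank_span_range_le_of_dual_comp_mem hcomp).trans (Submodule.finrank_map_le _ _)⟩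

/-- If `f : V → W` is such that `φ ∘ f` restricts to a polynomial of degree `≤ d` on every
finite-dimensional subspace of `V` for every linear functional `φ` on `W`, then for every
finite-dimensional subspace `V' ⊆ V` the span of `f(V')` is finite-dimensional, of dimension
at most `dim Sym_{≤ d}((V')^*)`, i.e. the dimension of the space of polynomials of total
degree at most `d` in `dim V'` variables. -/
theorem stmt4 (k V W : Type) [Field k] [CharZero k]
    [AddCommGroup V] [Module k V] [AddCommGroup W] [Module k W]
    (d : ℕ) (f : V → W)
    (hf : ∀ φ : W →ₗ[k] k, RestrictsToPolyDeg k d (φ ∘ f)) :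
    ∀ V' : Submodule k V, FiniteDimensional k V' →
      FiniteDimensional k (Submodule.span k (f '' (V' : Set V))) ∧
      Module.finrank k (Submodule.span k (f '' (V' : Set V))) ≤
        Module.finrank k
          (MvPolynomial.restrictTotalDegree (Fin (Module.finrank k V')) k d) :=
  stmt4_general k V W d f hf
end

section
/- Let f ∈ k[x₁,…,xₙ] with char k = 0. Then the quotient algebra A = k[∂₁,…,∂ₙ]/Ann(f) carries a non-degenerate pairing given by the linear functional ℓ(D) := (D·f)(0): the bilinear form ⟨D₁, D₂⟩ = (D₁D₂·f)(0) on A is well-defined and non-degenerate. -/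
open MvPolynomial

/-- The differential operator corresponding to a monomial in `k[∂₁,…,∂ₙ]`. -/
noncomputable def Dmon (k : Type) [Field k] (n : ℕ) (m : Fin n →₀ ℕ) :
    Module.End k (MvPolynomial (Fin n) k) :=
  (List.ofFn fun i : Fin n =>
    ((pderiv i).toLinearMap : Module.End k (MvPolynomial (Fin n) k)) ^ (m i)).prod

/-- The constant-coefficient differential operator `D ∈ k[∂₁,…,∂ₙ]` (encoded as a
polynomial in `k[x₁,…,xₙ]`) acting on `k[x₁,…,xₙ]`. -/
noncomputable def diffOp {k : Type} [Field k] {n : ℕ} (D : MvPolynomial (Fin n) k) :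
    Module.End k (MvPolynomial (Fin n) k) :=
  (AddMonoidAlgebra.coeff D).sum fun m c => c • Dmon k n m

/-!
Write `ℓ(D) = (D·f)(0)`. Since `∂^m x^s = s!/(s-m)! · x^(s-m)`, the constant term of `∂^m g` is
`m!` times the coefficient of `x^m` in `g`; in characteristic zero `m! ≠ 0`, so `D·f = 0` iff
`ℓ(DE) = 0` for every `E`. Thus `Ann(f)` is the largest ideal contained in `ker ℓ`, and for any
functional `ℓ` on a commutative algebra `(a, b) ↦ ℓ(ab)` descends to a non-degenerate pairing on
the quotient by that ideal. The same monomial formula shows `∂^(m+m') = ∂^m ∂^(m')`, which makes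
`D ↦ (D·–)` an algebra homomorphism.
-/

namespace LinearMap

variable {k R : Type*} [CommRing k] [CommRing R] [Algebra k R] (ℓ : R →ₗ[k] k)

def kerIdeal : Ideal R where
  carrier := {a | ∀ b, ℓ (a * b) = 0}
  zero_mem' b := by simp
  add_mem' ha hb c := by simp [add_mul, ha c, hb c]
  smul_mem' c a ha b := by simpa [mul_assoc, mul_left_comm c] using ha (c * b)

variable {ℓ} in
theorem mem_kerIdeal {a : R} : a ∈ ℓ.kerIdeal ↔ ∀ b, ℓ (a * b) = 0 := Iff.rfl

noncomputable def quotientKerIdeal : (R ⧸ ℓ.kerIdeal) →ₗ[k] k :=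
  (ℓ.kerIdeal.restrictScalars k).liftQ ℓ (fun a ha => by simpa using ha 1) ∘ₗ
    (Submodule.Quotient.restrictScalarsEquiv k ℓ.kerIdeal).symm.toLinearMap

@[simp]
theorem quotientKerIdeal_mk (a : R) :
    ℓ.quotientKerIdeal (Ideal.Quotient.mk _ a) = ℓ a :=
  rfl

noncomputable def quotientPairing : (R ⧸ ℓ.kerIdeal) →ₗ[k] (R ⧸ ℓ.kerIdeal) →ₗ[k] k :=
  (LinearMap.mul k _).compr₂ ℓ.quotientKerIdeal

@[simp]
theorem quotientPairing_mk (a b : R) :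
    ℓ.quotientPairing (Ideal.Quotient.mk _ a) (Ideal.Quotient.mk _ b) = ℓ (a * b) := by
  simp [quotientPairing, ← map_mul]

theorem separatingLeft_quotientPairing : ℓ.quotientPairing.SeparatingLeft := by
  intro x hx
  obtain ⟨a, rfl⟩ := Ideal.Quotient.mk_surjective x
  refine Ideal.Quotient.eq_zero_iff_mem.mpr fun b => ?_
  simpa using hx (Ideal.Quotient.mk _ b)

end LinearMap

section DiffOp

variable {k : Type} [Field k] {n : ℕ}

theorem pderiv_pow_apply_monomial (i : Fin n) (c : ℕ) (s : Fin n →₀ ℕ) (a : k) :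
    (((pderiv i).toLinearMap : Module.End k (MvPolynomial (Fin n) k)) ^ c) (monomial s a)
      = monomial (s - Finsupp.single i c) (a * (s i).descFactorial c) := by
  induction c with
  | zero => simp
  | succ c ih =>
    rw [pow_succ', Module.End.mul_apply, ih, Derivation.coeFn_coe, pderiv_monomial,
      tsub_tsub, ← Finsupp.single_add, Finsupp.tsub_apply, Finsupp.single_eq_same,
      Nat.descFactorial_succ]
    push_cast
    ring_nf

theorem list_prod_pderiv_pow_apply_monomial {L : List (Fin n)} (hL : L.Nodup) (e : Fin n → ℕ)
    (s : Fin n →₀ ℕ) (a : k) :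
    (L.map fun i =>
        ((pderiv i).toLinearMap : Module.End k (MvPolynomial (Fin n) k)) ^ e i).prod
        (monomial s a)
      = monomial (s - ∑ i ∈ L.toFinset, Finsupp.single i (e i))
          (a * ∏ i ∈ L.toFinset, ((s i).descFactorial (e i) : k)) := by
  induction L with
  | nil => simp
  | cons i L ih =>
    obtain ⟨hi, hL⟩ := List.nodup_cons.mp hL
    have hiL : i ∉ L.toFinset := by simpa using hi
    have hsi : (s - ∑ j ∈ L.toFinset, Finsupp.single j (e j)) i = s i := by
      simp [Finsupp.single_apply, hi]
    rw [List.map_cons, List.prod_cons, Module.End.mul_apply, ih hL, pderiv_pow_apply_monomial,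
      hsi, List.toFinset_cons, Finset.sum_insert hiL, Finset.prod_insert hiL, tsub_tsub,
      add_comm (Finsupp.single i (e i)), mul_assoc, mul_comm (∏ j ∈ _, _)]

theorem Dmon_monomial (m s : Fin n →₀ ℕ) (a : k) :
    Dmon k n m (monomial s a) = monomial (s - m) (a * ∏ i, ((s i).descFactorial (m i) : k)) := by
  have hm : ∑ i, Finsupp.single i (m i) = m := by
    ext j
    simp
  rw [Dmon, List.ofFn_eq_map, list_prod_pderiv_pow_apply_monomial (List.nodup_finRange n),
    List.toFinset_finRange, hm]

theorem Dmon_zero : Dmon k n 0 = 1 := by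
  simp [Dmon]

theorem Dmon_add (m m' : Fin n →₀ ℕ) : Dmon k n (m + m') = Dmon k n m * Dmon k n m' := by
  refine LinearMap.ext fun p => ?_
  induction p using MvPolynomial.induction_on' with
  | add p q hp hq => simp only [map_add, hp, hq]
  | monomial s a =>
    have hdesc (i : Fin n) : (s i).descFactorial (m i + m' i)
        = (s i - m' i).descFactorial (m i) * (s i).descFactorial (m' i) := by
      rw [← Nat.descFactorial_mul_descFactorial (Nat.le_add_left _ _), Nat.add_sub_cancel]
    rw [Module.End.mul_apply, Dmon_monomial, Dmon_monomial, Dmon_monomial, tsub_tsub,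
      add_comm m']
    simp only [Finsupp.add_apply, Finsupp.tsub_apply, hdesc, Nat.cast_mul,
      Finset.prod_mul_distrib]
    ring_nf

noncomputable def DmonHom (k : Type) [Field k] (n : ℕ) :
    Multiplicative (Fin n →₀ ℕ) →* Module.End k (MvPolynomial (Fin n) k) where
  toFun m := Dmon k n m.toAdd
  map_one' := Dmon_zero
  map_mul' m m' := Dmon_add m.toAdd m'.toAdd

noncomputable def diffOpAlgHom (k : Type) [Field k] (n : ℕ) :
    MvPolynomial (Fin n) k →ₐ[k] Module.End k (MvPolynomial (Fin n) k) :=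
  AddMonoidAlgebra.lift k _ (Fin n →₀ ℕ) (DmonHom k n)

theorem diffOpAlgHom_apply (D : MvPolynomial (Fin n) k) : diffOpAlgHom k n D = diffOp D :=
  AddMonoidAlgebra.lift_apply _ _

theorem diffOp_mul (D₁ D₂ : MvPolynomial (Fin n) k) :
    diffOp (D₁ * D₂) = diffOp D₁ * diffOp D₂ := by
  simp only [← diffOpAlgHom_apply, map_mul]

theorem diffOp_monomial (m : Fin n →₀ ℕ) (c : k) : diffOp (monomial m c) = c • Dmon k n m :=
  Finsupp.sum_single_index (zero_smul k _)

theorem constantCoeff_Dmon (m : Fin n →₀ ℕ) (g : MvPolynomial (Fin n) k) :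
    constantCoeff (Dmon k n m g) = coeff m g * ∏ i, ((m i).factorial : k) := by
  induction g using MvPolynomial.induction_on' with
  | add p q hp hq => rw [map_add, map_add, hp, hq, coeff_add, add_mul]
  | monomial s a =>
    rw [Dmon_monomial, constantCoeff_monomial, coeff_monomial]
    by_cases hsm : s = m
    · subst hsm
      simp [Nat.descFactorial_self]
    · rw [if_neg hsm, zero_mul, ite_eq_right_iff]
      intro hle
      obtain ⟨i, hi⟩ : ∃ i, s i < m i := by
        by_contra! h
        exact hsm (le_antisymm (tsub_eq_zero_iff_le.mp hle) h)
      have hzero : ((s i).descFactorial (m i) : k) = 0 := by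
        rw [Nat.descFactorial_eq_zero_iff_lt.mpr hi, Nat.cast_zero]
      rw [Finset.prod_eq_zero (Finset.mem_univ i) hzero, mul_zero]

theorem diffOp_mul_apply (D E f : MvPolynomial (Fin n) k) :
    diffOp (D * E) f = diffOp D (diffOp E f) := by
  rw [diffOp_mul, Module.End.mul_apply]

theorem diffOp_apply_eq_zero_iff [CharZero k] {D f : MvPolynomial (Fin n) k} :
    diffOp D f = 0 ↔ ∀ E, constantCoeff (diffOp (D * E) f) = 0 := by
  refine ⟨fun h E => by rw [mul_comm, diffOp_mul_apply, h, map_zero, map_zero], fun h => ?_⟩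
  ext m
  have hm := h (monomial m 1)
  rw [mul_comm, diffOp_mul_apply, diffOp_monomial, one_smul, constantCoeff_Dmon] at hm
  exact (mul_eq_zero.mp hm).resolve_right
    (Finset.prod_ne_zero_iff.mpr fun i _ => Nat.cast_ne_zero.mpr (Nat.factorial_ne_zero _))

noncomputable def diffOpEvalZero (f : MvPolynomial (Fin n) k) :
    MvPolynomial (Fin n) k →ₗ[k] k :=
  lcoeff k 0 ∘ₗ LinearMap.applyₗ f ∘ₗ (diffOpAlgHom k n).toLinearMap

theorem diffOpEvalZero_apply (f D : MvPolynomial (Fin n) k) :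
    diffOpEvalZero f D = constantCoeff (diffOp D f) := by
  simp [diffOpEvalZero, diffOpAlgHom_apply, constantCoeff_eq]

theorem mem_kerIdeal_diffOpEvalZero [CharZero k] {f D : MvPolynomial (Fin n) k} :
    D ∈ (diffOpEvalZero f).kerIdeal ↔ diffOp D f = 0 := by
  simp only [LinearMap.mem_kerIdeal, diffOpEvalZero_apply, diffOp_apply_eq_zero_iff]

end DiffOp

/-- For `f ∈ k[x₁,…,xₙ]` (char `k = 0`), the quotient `k[∂₁,…,∂ₙ]/Ann(f)` carries a
well-defined non-degenerate pairing `⟨D₁,D₂⟩ = (D₁D₂·f)(0)` given by the linear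
functional `ℓ(D) = (D·f)(0)`. -/
theorem stmt16 (k : Type) [Field k] [CharZero k] (n : ℕ) (f : MvPolynomial (Fin n) k) :
    ∃ I : Ideal (MvPolynomial (Fin n) k),
      (I : Set (MvPolynomial (Fin n) k))
        = {D : MvPolynomial (Fin n) k | diffOp D f = 0} ∧
      ∃ Bq : (MvPolynomial (Fin n) k ⧸ I) →ₗ[k] (MvPolynomial (Fin n) k ⧸ I) →ₗ[k] k,
        (∀ D₁ D₂ : MvPolynomial (Fin n) k,
          Bq (Ideal.Quotient.mk I D₁) (Ideal.Quotient.mk I D₂)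
            = MvPolynomial.constantCoeff (diffOp (D₁ * D₂) f)) ∧
        (∀ a : MvPolynomial (Fin n) k ⧸ I, a ≠ 0 → ∃ b, Bq a b ≠ 0) := by
  set ℓ := diffOpEvalZero f
  refine ⟨ℓ.kerIdeal, Set.ext fun D => mem_kerIdeal_diffOpEvalZero, ℓ.quotientPairing,
    fun D₁ D₂ => by rw [ℓ.quotientPairing_mk, diffOpEvalZero_apply], fun a ha => ?_⟩
  exact not_forall.mp (mt (ℓ.separatingLeft_quotientPairing a) ha)
end
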